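/- Let μ be a probability measure on a measurable space Ω, let T, E₁, E₀ be measurable subsets of Ω with μ(E₀) > 0, let α be a countable type whose singletons are measurable, let Y : Ω → α be measurable, and let ε ≥ 0 be real. Assume that for every y ∈ α with μ({Y = y} ∩ E₁) > 0 one has exp(−ε)·μ[T | E₀] ≤ μ[T | {Y = y} ∩ E₁] ≤ exp(ε)·μ[T | E₀]. Then for every subset S ⊆ α with μ({Y ∈ S} ∩ E₁) > 0 and μ({Y ∉ S} ∩ E₁) > 0, exp(−2ε)·μ[T | {Y ∉ S} ∩ E₁] ≤ μ[T | {Y ∈ S} ∩ E₁] ≤ exp(2ε)·μ[T | {Y ∉ S} ∩ E₁]. -/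

import Mathlib

open MeasureTheory

/-! If `B` is a countable disjoint union of pieces, `μ[T | B]` is an average of the `μ[T | Bᵢ]`
weighted by `μ(Bᵢ)`, so it lies in any interval containing all of them. Applied to the fibres of
`Y` inside `E₁`, both `μ[T | {Y ∈ S} ∩ E₁]` and `μ[T | {Y ∉ S} ∩ E₁]` lie in
`[e^{-ε} μ[T | E₀], e^{ε} μ[T | E₀]]`, and any two points of that interval are within a factor
`e^{2ε}` of each other. -/

/-- Conditional probability `μ[A | B] = μ(A ∩ B) / μ(B)` as a real number. -/
noncomputable def condP {Ω : Type*} [MeasurableSpace Ω] (μ : Measure Ω) (A B : Set Ω) : ℝ :=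
  (μ (A ∩ B)).toReal / (μ B).toReal

section

variable {Ω ι : Type*} [MeasurableSpace Ω] {μ : Measure Ω} {T B : Set Ω}

lemma measure_inter_iUnion [Countable ι] (hT : MeasurableSet T) {s : ι → Set Ω}
    (hs : ∀ i, MeasurableSet (s i)) (hd : Pairwise (Function.onFun Disjoint s)) :
    μ (T ∩ ⋃ i, s i) = ∑' i, μ (T ∩ s i) := by
  rw [Set.inter_iUnion]
  exact measure_iUnion (fun i j hij => (hd hij).mono Set.inter_subset_right Set.inter_subset_right)
    fun i => hT.inter (hs i)

lemma measure_inter_iUnion_le_mul [Countable ι] (hT : MeasurableSet T) {s : ι → Set Ω}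
    (hs : ∀ i, MeasurableSet (s i)) (hd : Pairwise (Function.onFun Disjoint s)) {c : ENNReal}
    (h : ∀ i, μ (T ∩ s i) ≤ c * μ (s i)) :
    μ (T ∩ ⋃ i, s i) ≤ c * μ (⋃ i, s i) := by
  rw [measure_inter_iUnion hT hs hd, measure_iUnion hd hs, ← ENNReal.tsum_mul_left]
  exact ENNReal.tsum_le_tsum h

lemma mul_measure_iUnion_le_measure_inter [Countable ι] (hT : MeasurableSet T) {s : ι → Set Ω}
    (hs : ∀ i, MeasurableSet (s i)) (hd : Pairwise (Function.onFun Disjoint s)) {c : ENNReal}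
    (h : ∀ i, c * μ (s i) ≤ μ (T ∩ s i)) :
    c * μ (⋃ i, s i) ≤ μ (T ∩ ⋃ i, s i) := by
  rw [measure_inter_iUnion hT hs hd, measure_iUnion hd hs, ← ENNReal.tsum_mul_left]
  exact ENNReal.tsum_le_tsum h

variable [IsFiniteMeasure μ] {c : ℝ}

lemma condP_le_iff (hc : 0 ≤ c) (hB : 0 < (μ B).toReal) :
    condP μ T B ≤ c ↔ μ (T ∩ B) ≤ ENNReal.ofReal c * μ B := by
  rw [condP, div_le_iff₀ hB, ← ENNReal.toReal_le_toReal (measure_ne_top _ _) (by finiteness),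
    ENNReal.toReal_mul, ENNReal.toReal_ofReal hc]

lemma le_condP_iff (hc : 0 ≤ c) (hB : 0 < (μ B).toReal) :
    c ≤ condP μ T B ↔ ENNReal.ofReal c * μ B ≤ μ (T ∩ B) := by
  rw [condP, le_div_iff₀ hB, ← ENNReal.toReal_le_toReal (by finiteness) (measure_ne_top _ _),
    ENNReal.toReal_mul, ENNReal.toReal_ofReal hc]

lemma measure_inter_le_of_condP_le (hc : 0 ≤ c) (h : 0 < (μ B).toReal → condP μ T B ≤ c) :
    μ (T ∩ B) ≤ ENNReal.ofReal c * μ B := by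
  by_cases hB : μ B = 0
  · simp [measure_mono_null Set.inter_subset_right hB]
  · have hB' : 0 < (μ B).toReal := ENNReal.toReal_pos hB (measure_ne_top μ B)
    exact (condP_le_iff hc hB').1 (h hB')

lemma mul_measure_le_of_le_condP (hc : 0 ≤ c) (h : 0 < (μ B).toReal → c ≤ condP μ T B) :
    ENNReal.ofReal c * μ B ≤ μ (T ∩ B) := by
  by_cases hB : μ B = 0
  · simp [hB]
  · have hB' : 0 < (μ B).toReal := ENNReal.toReal_pos hB (measure_ne_top μ B)
    exact (le_condP_iff hc hB').1 (h hB')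

lemma condP_iUnion_le [Countable ι] (hT : MeasurableSet T) {s : ι → Set Ω}
    (hs : ∀ i, MeasurableSet (s i)) (hd : Pairwise (Function.onFun Disjoint s)) (hc : 0 ≤ c)
    (h : ∀ i, 0 < (μ (s i)).toReal → condP μ T (s i) ≤ c) :
    condP μ T (⋃ i, s i) ≤ c := by
  rcases (ENNReal.toReal_nonneg (a := μ (⋃ i, s i))).eq_or_lt with h0 | hpos
  · simp [condP, ← h0, hc]  -- `condP` is `0` on a null set
  exact (condP_le_iff hc hpos).2 <| measure_inter_iUnion_le_mul hT hs hd fun i =>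
    measure_inter_le_of_condP_le hc (h i)

lemma le_condP_iUnion [Countable ι] (hT : MeasurableSet T) {s : ι → Set Ω}
    (hs : ∀ i, MeasurableSet (s i)) (hd : Pairwise (Function.onFun Disjoint s)) (hc : 0 ≤ c)
    (h : ∀ i, 0 < (μ (s i)).toReal → c ≤ condP μ T (s i)) (hpos : 0 < (μ (⋃ i, s i)).toReal) :
    c ≤ condP μ T (⋃ i, s i) :=
  (le_condP_iff hc hpos).2 <| mul_measure_iUnion_le_measure_inter hT hs hd fun i =>
    mul_measure_le_of_le_condP hc (h i)

lemma condP_preimage_inter_mem_Icc {α : Type*} [MeasurableSpace α] [Countable α]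
    [MeasurableSingletonClass α] {E : Set Ω} (hT : MeasurableSet T) (hE : MeasurableSet E)
    {Y : Ω → α} (hY : Measurable Y) {a b : ℝ} (ha : 0 ≤ a) (hb : 0 ≤ b)
    (h : ∀ y, 0 < (μ ({ω | Y ω = y} ∩ E)).toReal → condP μ T ({ω | Y ω = y} ∩ E) ∈ Set.Icc a b)
    (S : Set α) (hS : 0 < (μ ({ω | Y ω ∈ S} ∩ E)).toReal) :
    condP μ T ({ω | Y ω ∈ S} ∩ E) ∈ Set.Icc a b := by
  have hunion : {ω | Y ω ∈ S} ∩ E = ⋃ y : S, ({ω | Y ω = y} ∩ E) := by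
    ext ω
    simp
  have hfiber : ∀ y : S, MeasurableSet ({ω | Y ω = y} ∩ E) := fun y =>
    (hY (measurableSet_singleton _)).inter hE
  have hd : Pairwise (Function.onFun Disjoint fun y : S => {ω | Y ω = y} ∩ E) :=
    fun y z hyz => Set.disjoint_left.2 fun ω hy hz => hyz (Subtype.ext (hy.1.symm.trans hz.1))
  rw [hunion] at hS ⊢
  exact ⟨le_condP_iUnion hT hfiber hd ha (fun y hy => (h y hy).1) hS,
    condP_iUnion_le hT hfiber hd hb fun y hy => (h y hy).2⟩

end

lemma exp_two_mul_bounds_of_mem_Icc {ε p x z : ℝ}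
    (hx : x ∈ Set.Icc (Real.exp (-ε) * p) (Real.exp ε * p))
    (hz : z ∈ Set.Icc (Real.exp (-ε) * p) (Real.exp ε * p)) :
    Real.exp (-(2 * ε)) * z ≤ x ∧ x ≤ Real.exp (2 * ε) * z := by
  have key : ∀ {u v : ℝ}, u ≤ Real.exp ε * p → Real.exp (-ε) * p ≤ v →
      u ≤ Real.exp (2 * ε) * v := fun {u v} hu hv =>
    calc u ≤ Real.exp ε * p := hu
      _ = Real.exp (2 * ε) * (Real.exp (-ε) * p) := by rw [← mul_assoc, ← Real.exp_add]; ring_nf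
      _ ≤ Real.exp (2 * ε) * v := by gcongr
  refine ⟨?_, key hx.2 hz.1⟩
  calc Real.exp (-(2 * ε)) * z ≤ Real.exp (-(2 * ε)) * (Real.exp (2 * ε) * x) := by
        gcongr
        exact key hz.2 hx.1
    _ = x := by rw [← mul_assoc, ← Real.exp_add]; simp

theorem stmt_2 {Ω α : Type*} [MeasurableSpace Ω] [MeasurableSpace α] [Countable α]
    [MeasurableSingletonClass α]
    (μ : Measure Ω) [IsProbabilityMeasure μ]
    (T E1 E0 : Set Ω) (hT : MeasurableSet T) (hE1 : MeasurableSet E1)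
    (Y : Ω → α) (hY : Measurable Y) (ε : ℝ)
    (h : ∀ y : α, 0 < (μ ({ω | Y ω = y} ∩ E1)).toReal →
      Real.exp (-ε) * condP μ T E0 ≤ condP μ T ({ω | Y ω = y} ∩ E1) ∧
      condP μ T ({ω | Y ω = y} ∩ E1) ≤ Real.exp ε * condP μ T E0) :
    ∀ S : Set α, 0 < (μ ({ω | Y ω ∈ S} ∩ E1)).toReal →
      0 < (μ ({ω | Y ω ∉ S} ∩ E1)).toReal →
      Real.exp (-(2*ε)) * condP μ T ({ω | Y ω ∉ S} ∩ E1) ≤ condP μ T ({ω | Y ω ∈ S} ∩ E1) ∧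
      condP μ T ({ω | Y ω ∈ S} ∩ E1) ≤ Real.exp (2*ε) * condP μ T ({ω | Y ω ∉ S} ∩ E1) := by
  intro S hS hSc
  have hp : 0 ≤ condP μ T E0 := by unfold condP; positivity
  have hband := condP_preimage_inter_mem_Icc hT hE1 hY (by positivity) (by positivity) h
  exact exp_two_mul_bounds_of_mem_Icc (hband S hS) (hband Sᶜ hSc)
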